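/- arXiv:1301.1148 — 4 statements merged into one kernel-verified Lean document; each statement's English description precedes it below -/
import Mathlib

section
/- For every integer n ≥ 2, every real number κ ≤ 0 and every constant ω_n > 0, the function s ↦ B^κ_n(s)/S^κ_n(s) is non-decreasing on (0, ∞). -/
/-! With `S' = C` and `m = n - 1`, the quotient rule reduces the monotonicity of
`(∫₀ˣ S^m) / S(x)^m` to `m C(x) ∫₀ˣ S^m ≤ S(x)^(m+1)`.
The difference `S^(m+1) / C - m ∫₀ˣ S^m` vanishes at `0` and has derivative
`S^m (C² - S C') / C²`, which is nonnegative as soon as `S C' ≤ C²`;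
for `S t = sinh (c t) / c` and `C t = cosh (c t)` this is `sinh² ≤ cosh²`. -/

open Real Set

theorem monotoneOn_integral_div_of_integral_mul_deriv_le_sq {F F' : ℝ → ℝ} (hF : Continuous F)
    (hF' : ∀ x, 0 < x → HasDerivAt F (F' x) x) (hF0 : ∀ x, 0 < x → F x ≠ 0)
    (hle : ∀ x, 0 < x → (∫ u in 0..x, F u) * F' x ≤ F x ^ 2) :
    MonotoneOn (fun x => (∫ u in 0..x, F u) / F x) (Ioi 0) := by
  have hderiv : ∀ x, 0 < x → HasDerivAt (fun x => (∫ u in 0..x, F u) / F x)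
      ((F x * F x - (∫ u in 0..x, F u) * F' x) / F x ^ 2) x := fun x hx =>
    (hF.integral_hasStrictDerivAt 0 x).hasDerivAt.div (hF' x hx) (hF0 x hx)
  refine monotoneOn_of_hasDerivWithinAt_nonneg (convex_Ioi 0)
    (fun x hx => (hderiv x hx).continuousAt.continuousWithinAt)
    (fun x hx => (hderiv x (interior_subset hx)).hasDerivWithinAt) fun x hx => ?_
  rw [interior_Ioi] at hx
  exact div_nonneg (sub_nonneg.2 (sq (F x) ▸ hle x hx)) (sq_nonneg _)

section

variable {S C C' : ℝ → ℝ}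

theorem pos_of_hasDerivAt_pos (hS0 : S 0 = 0) (hS : ∀ t, HasDerivAt S (C t) t)
    (hC0 : ∀ t, 0 < C t) {t : ℝ} (ht : 0 < t) : 0 < S t :=
  hS0 ▸ strictMono_of_hasDerivAt_pos hS hC0 ht

theorem mul_integral_pow_le_pow_div (k : ℕ) (hS0 : S 0 = 0)
    (hS : ∀ t, HasDerivAt S (C t) t) (hC : ∀ t, HasDerivAt C (C' t) t) (hC0 : ∀ t, 0 < C t)
    (hSC : ∀ t, 0 < t → S t * C' t ≤ C t ^ 2) {x : ℝ} (hx : 0 ≤ x) :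
    k * ∫ u in 0..x, S u ^ k ≤ S x ^ (k + 1) / C x := by
  have hSk : Continuous fun u => S u ^ k :=
    (Differentiable.continuous fun t => (hS t).differentiableAt).pow k
  set g : ℝ → ℝ := fun t => S t ^ (k + 1) / C t - k * ∫ u in 0..t, S u ^ k
  have hderiv : ∀ t, HasDerivAt g
      (((k + 1 : ℕ) * S t ^ k * C t * C t - S t ^ (k + 1) * C' t) / C t ^ 2 - k * S t ^ k) t := by
    intro t
    refine ((((hS t).pow (k + 1)).div (hC t) (hC0 t).ne').sub
      ((hSk.integral_hasStrictDerivAt 0 t).hasDerivAt.const_mul (k : ℝ))).congr_deriv ?_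
    simp only [Nat.add_sub_cancel, Pi.pow_apply]
  have hmono : MonotoneOn g (Ici 0) := by
    refine monotoneOn_of_hasDerivWithinAt_nonneg (convex_Ici 0)
      (fun t _ => (hderiv t).continuousAt.continuousWithinAt)
      (fun t _ => (hderiv t).hasDerivWithinAt) fun t ht => ?_
    rw [interior_Ici] at ht
    have hCt := (hC0 t).ne'
    have hkey : 0 ≤ S t ^ k * (C t ^ 2 - S t * C' t) / C t ^ 2 :=
      div_nonneg (mul_nonneg (pow_nonneg (pos_of_hasDerivAt_pos hS0 hS hC0 ht).le k)
        (sub_nonneg.2 (hSC t ht))) (sq_nonneg _)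
    convert hkey using 1
    field_simp
    push_cast
    ring
  simpa [g, hS0] using hmono self_mem_Ici hx hx

theorem monotoneOn_integral_pow_div_pow (k : ℕ) (hS0 : S 0 = 0)
    (hS : ∀ t, HasDerivAt S (C t) t) (hC : ∀ t, HasDerivAt C (C' t) t) (hC0 : ∀ t, 0 < C t)
    (hSC : ∀ t, 0 < t → S t * C' t ≤ C t ^ 2) :
    MonotoneOn (fun x => (∫ u in 0..x, S u ^ k) / S x ^ k) (Ioi 0) := by
  have hSpos : ∀ t, 0 < t → 0 < S t := fun t ht => pos_of_hasDerivAt_pos hS0 hS hC0 ht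
  refine monotoneOn_integral_div_of_integral_mul_deriv_le_sq
    ((Differentiable.continuous fun t => (hS t).differentiableAt).pow k)
    (fun x _ => (hS x).pow k) (fun x hx => pow_ne_zero k (hSpos x hx).ne') fun x hx => ?_
  rcases k with _ | j
  · simp
  · have key := mul_integral_pow_le_pow_div (j + 1) hS0 hS hC hC0 hSC hx.le
    have hfac : 0 ≤ S x ^ j * C x := mul_nonneg (pow_nonneg (hSpos x hx).le j) (hC0 x).le
    calc (∫ u in 0..x, S u ^ (j + 1)) * (((j + 1 : ℕ) : ℝ) * S x ^ (j + 1 - 1) * C x)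
        = ((j + 1 : ℕ) * ∫ u in 0..x, S u ^ (j + 1)) * (S x ^ j * C x) := by
          rw [Nat.add_sub_cancel]; ring
      _ ≤ S x ^ (j + 1 + 1) / C x * (S x ^ j * C x) := mul_le_mul_of_nonneg_right key hfac
      _ = (S x ^ (j + 1)) ^ 2 := by field_simp [(hC0 x).ne']; ring

end

open intervalIntegral in
theorem stmt_2_general (n : ℕ) (κ : ℝ) (ω : ℝ) (hω : 0 < ω)
    (S : ℝ → ℝ)
    (hS : ∀ t : ℝ, S t =
        if κ < 0 then Real.sinh (Real.sqrt (-κ) * t) / Real.sqrt (-κ) else t)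
    (Sn : ℝ → ℝ) (hSn : ∀ R : ℝ, Sn R = ω * (S R) ^ (n - 1))
    (Bn : ℝ → ℝ) (hBn : ∀ R : ℝ, Bn R = ∫ s in (0:ℝ)..R, Sn s) :
    MonotoneOn (fun s => Bn s / Sn s) (Set.Ioi (0:ℝ)) := by
  have hratio :
      (fun s => Bn s / Sn s) = fun s => (∫ u in 0..s, S u ^ (n - 1)) / S s ^ (n - 1) := by
    funext s
    simp only [hBn, hSn, integral_const_mul, mul_div_mul_left _ _ hω.ne']
  rw [hratio]
  by_cases hκ : κ < 0
  · set c := √(-κ)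
    have hc : 0 < c := sqrt_pos.2 (neg_pos.2 hκ)
    obtain rfl : S = fun t => sinh (c * t) / c := funext fun t => by rw [hS, if_pos hκ]
    refine monotoneOn_integral_pow_div_pow (C := fun t => cosh (c * t))
      (C' := fun t => sinh (c * t) * c) (n - 1) (by simp) (fun t => ?_) (fun t => ?_)
      (fun t => cosh_pos _) (fun t _ => ?_)
    · simpa [hc.ne'] using (((hasDerivAt_id t).const_mul c).sinh).div_const c
    · simpa using ((hasDerivAt_id t).const_mul c).cosh
    · field_simp
      linarith [cosh_sq (c * t)]
  · obtain rfl : S = id := funext fun t => by rw [hS, if_neg hκ]; rfl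
    exact monotoneOn_integral_pow_div_pow (C := 1) (C' := 0) (n - 1) rfl hasDerivAt_id
      (fun t => hasDerivAt_const t 1) (fun _ => one_pos) fun t _ => by simp

open intervalIntegral in
/-- For n ≥ 2, κ ≤ 0, ω_n > 0, with S_κ(t) = sinh(√(−κ)·t)/√(−κ)
if κ < 0 and S_0(t) = t, S^κ_n(R) = ω_n·S_κ(R)^{n−1} and
B^κ_n(R) = ∫₀^R S^κ_n(s) ds, the function s ↦ B^κ_n(s)/S^κ_n(s) is
non-decreasing on (0, ∞). -/
theorem stmt_2 (n : ℕ) (hn : 2 ≤ n) (κ : ℝ) (hκ : κ ≤ 0) (ω : ℝ) (hω : 0 < ω)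
    (S : ℝ → ℝ)
    (hS : ∀ t : ℝ, S t =
        if κ < 0 then Real.sinh (Real.sqrt (-κ) * t) / Real.sqrt (-κ) else t)
    (Sn : ℝ → ℝ) (hSn : ∀ R : ℝ, Sn R = ω * (S R) ^ (n - 1))
    (Bn : ℝ → ℝ) (hBn : ∀ R : ℝ, Bn R = ∫ s in (0:ℝ)..R, Sn s) :
    MonotoneOn (fun s => Bn s / Sn s) (Set.Ioi (0:ℝ)) :=
  stmt_2_general n κ ω hω S hS Sn hSn Bn hBn
end

section
/- For every integer n ≥ 2, every real number κ < 0, every constant ω_n > 0, every R > 0 and every s ∈ (R/2, R), one has f_R'(s)²·S^κ_n(s) ≤ F(R), where F(R) = ((n−1)²/4)·Ct_κ(R/2)² + 4π²/R² + (2(n−1)π/R)·Ct_κ(R/2). -/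
private lemma stmt8_aux (c si A B C : ℝ) (hc : -1 ≤ c) (hc' : c ≤ 1)
    (hsi : -1 ≤ si) (hsi' : si ≤ 1) (hA : 0 ≤ A) (hB0 : 0 ≤ B) (hBC : B ≤ C) :
    (c * A - si * (B / 2)) ^ 2 ≤ (A + C / 2) ^ 2 := by
  have hC0 : 0 ≤ C := le_trans hB0 hBC
  apply sq_le_sq'
  · nlinarith
  · nlinarith

open Real in
/-- For n ≥ 2, κ < 0, ω_n > 0, R > 0 and s ∈ (R/2, R), with
S_κ(t) = sinh(√(−κ)·t)/√(−κ), Ct_κ(t) = √(−κ)·coth(√(−κ)·t)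
(coth x = cosh x / sinh x), S^κ_n(R) = ω_n·S_κ(R)^{n−1} and
f_R(s) = sin(2π(s − R/2)/R)/(S^κ_n(s))^{1/2}, one has
f_R'(s)²·S^κ_n(s) ≤ F(R), where
F(R) = ((n−1)²/4)·Ct_κ(R/2)² + 4π²/R² + (2(n−1)π/R)·Ct_κ(R/2). -/
theorem stmt_8 (n : ℕ) (hn : 2 ≤ n) (κ : ℝ) (hκ : κ < 0) (ω : ℝ) (hω : 0 < ω)
    (R : ℝ) (hR : 0 < R)
    (S : ℝ → ℝ)
    (hS : ∀ t : ℝ, S t = Real.sinh (Real.sqrt (-κ) * t) / Real.sqrt (-κ))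
    (Ct : ℝ → ℝ)
    (hCt : ∀ t : ℝ, Ct t =
        Real.sqrt (-κ) *
          (Real.cosh (Real.sqrt (-κ) * t) / Real.sinh (Real.sqrt (-κ) * t)))
    (Sn : ℝ → ℝ) (hSn : ∀ r : ℝ, Sn r = ω * (S r) ^ (n - 1))
    (f : ℝ → ℝ)
    (hf : ∀ s : ℝ, f s = Real.sin (2 * π * (s - R / 2) / R) / Real.sqrt (Sn s)) :
    ∀ s ∈ Set.Ioo (R / 2) R,
      (deriv f s) ^ 2 * Sn s ≤
        (((n : ℝ) - 1) ^ 2 / 4) * (Ct (R / 2)) ^ 2 + 4 * π ^ 2 / R ^ 2 +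
          (2 * ((n : ℝ) - 1) * π / R) * Ct (R / 2) := by
  intro s hs
  obtain ⟨hs1, hs2⟩ := hs
  have hR2 : 0 < R / 2 := by linarith
  have hs0 : 0 < s := by linarith
  have ha : 0 < Real.sqrt (-κ) := Real.sqrt_pos.mpr (by linarith)
  set a := Real.sqrt (-κ) with ha_def
  have hsinh : 0 < Real.sinh (a * s) := Real.sinh_pos_iff.mpr (by positivity)
  have hsinhR : 0 < Real.sinh (a * (R / 2)) := Real.sinh_pos_iff.mpr (by positivity)
  have hcosh : 0 < Real.cosh (a * s) := Real.cosh_pos _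
  have hcoshR : 0 < Real.cosh (a * (R / 2)) := Real.cosh_pos _
  have hSpos : 0 < Real.sinh (a * s) / a := by positivity
  have hSnpos : 0 < ω * (Real.sinh (a * s) / a) ^ (n - 1) := by positivity
  have hsq : Real.sqrt (ω * (Real.sinh (a * s) / a) ^ (n - 1)) ^ 2
      = ω * (Real.sinh (a * s) / a) ^ (n - 1) := Real.sq_sqrt hSnpos.le
  have hsqpos : 0 < Real.sqrt (ω * (Real.sinh (a * s) / a) ^ (n - 1)) :=
    Real.sqrt_pos.mpr hSnpos
  have hfeq : f = fun x => Real.sin (2 * π * (x - R / 2) / R) /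
      Real.sqrt (ω * (Real.sinh (a * x) / a) ^ (n - 1)) := by
    funext x; rw [hf, hSn, hS]
  -- derivative of the numerator
  have hθ : HasDerivAt (fun x : ℝ => 2 * π * (x - R / 2) / R) (2 * π / R) s := by
    simpa using (((hasDerivAt_id s).sub_const (R / 2)).const_mul (2 * π)).div_const R
  have hnum := hθ.sin
  -- derivative of Sn
  have hlin : HasDerivAt (fun x : ℝ => a * x) a s := by
    simpa using (hasDerivAt_id s).const_mul a
  have hSd := (hlin.sinh.div_const a).pow (n - 1)
  have hSnd := hSd.const_mul ω
  have hden := hSnd.sqrt (ne_of_gt hSnpos)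
  have hdiv := hnum.div hden (ne_of_gt hsqpos)
  have hderiv : deriv f s =
      (Real.cos (2 * π * (s - R / 2) / R) * (2 * π / R) *
          Real.sqrt (ω * (Real.sinh (a * s) / a) ^ (n - 1)) -
        Real.sin (2 * π * (s - R / 2) / R) *
          (ω * (↑(n - 1) * (Real.sinh (a * s) / a) ^ (n - 1 - 1) *
              (Real.cosh (a * s) * a / a)) /
            (2 * Real.sqrt (ω * (Real.sinh (a * s) / a) ^ (n - 1))))) /
      Real.sqrt (ω * (Real.sinh (a * s) / a) ^ (n - 1)) ^ 2 := by
    rw [hfeq]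
    exact hdiv.deriv
  -- key algebraic identity
  have hcast : ((n - 1 : ℕ) : ℝ) = (n : ℝ) - 1 := by
    have h1 : (1 : ℕ) ≤ n := by omega
    push_cast [h1]; ring
  have hpow_split : (Real.sinh (a * s) / a) ^ (n - 1)
      = (Real.sinh (a * s) / a) ^ (n - 2) * (Real.sinh (a * s) / a) := by
    rw [← pow_succ]; congr 1; omega
  have hn2 : n - 1 - 1 = n - 2 := by omega
  set c := Real.cos (2 * π * (s - R / 2) / R)
  set si := Real.sin (2 * π * (s - R / 2) / R)
  set h := Real.sqrt (ω * (Real.sinh (a * s) / a) ^ (n - 1))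
  have hane : a ≠ 0 := ne_of_gt ha
  have hsne : Real.sinh (a * s) ≠ 0 := ne_of_gt hsinh
  have hhne : h ≠ 0 := ne_of_gt hsqpos
  set B := ((n : ℝ) - 1) * (a * (Real.cosh (a * s) / Real.sinh (a * s))) with hB_def
  have hQ : ω * (((n - 1 : ℕ) : ℝ) * (Real.sinh (a * s) / a) ^ (n - 1 - 1) *
      (Real.cosh (a * s) * a / a)) = B * h ^ 2 := by
    rw [hsq, hn2, hcast, hB_def, hpow_split]
    field_simp
  have hD : deriv f s = (c * (2 * π / R) - si * (B / 2)) / h := by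
    rw [hderiv, hQ]
    field_simp
  have hkey : (deriv f s) ^ 2 * Sn s = (c * (2 * π / R) - si * (B / 2)) ^ 2 := by
    rw [hD, hSn s, hS s, div_pow, hsq]
    exact div_mul_cancel₀ _ (ne_of_gt hSnpos)
  rw [hkey, hCt]
  -- monotonicity of Ct and final bound
  set CtR := a * (Real.cosh (a * (R / 2)) / Real.sinh (a * (R / 2))) with hCtR_def
  have hCtRpos : 0 ≤ CtR := by positivity
  have hmono : a * (Real.cosh (a * s) / Real.sinh (a * s)) ≤ CtR := by
    rw [hCtR_def]
    have key : Real.cosh (a * s) * Real.sinh (a * (R / 2))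
        ≤ Real.cosh (a * (R / 2)) * Real.sinh (a * s) := by
      have h0 : 0 ≤ Real.sinh (a * s - a * (R / 2)) :=
        le_of_lt (Real.sinh_pos_iff.mpr (by nlinarith))
      rw [Real.sinh_sub] at h0
      linarith
    have hdiv2 : Real.cosh (a * s) / Real.sinh (a * s)
        ≤ Real.cosh (a * (R / 2)) / Real.sinh (a * (R / 2)) :=
      (div_le_div_iff₀ hsinh hsinhR).mpr key
    exact mul_le_mul_of_nonneg_left hdiv2 ha.le
  have hBpos : 0 ≤ B := by
    rw [hB_def]
    have : (0:ℝ) ≤ (n : ℝ) - 1 := by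
      have : (2:ℝ) ≤ (n:ℝ) := by exact_mod_cast hn
      linarith
    positivity
  have hBle : B ≤ ((n : ℝ) - 1) * CtR := by
    rw [hB_def]
    have hn1 : (0:ℝ) ≤ (n : ℝ) - 1 := by
      have : (2:ℝ) ≤ (n:ℝ) := by exact_mod_cast hn
      linarith
    exact mul_le_mul_of_nonneg_left hmono hn1
  have hA : (0:ℝ) < 2 * π / R := by positivity
  have hc1' : -1 ≤ c ∧ c ≤ 1 := abs_le.mp (Real.abs_cos_le_one _)
  have hsi1' : -1 ≤ si ∧ si ≤ 1 := abs_le.mp (Real.abs_sin_le_one _)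
  have hsqle : (c * (2 * π / R) - si * (B / 2)) ^ 2
      ≤ (2 * π / R + ((n : ℝ) - 1) * CtR / 2) ^ 2 :=
    stmt8_aux c si (2 * π / R) B (((n : ℝ) - 1) * CtR) hc1'.1 hc1'.2 hsi1'.1
      hsi1'.2 hA.le hBpos hBle
  calc (c * (2 * π / R) - si * (B / 2)) ^ 2
      ≤ (2 * π / R + ((n : ℝ) - 1) * CtR / 2) ^ 2 := hsqle
    _ = ((n : ℝ) - 1) ^ 2 / 4 * CtR ^ 2 + 4 * π ^ 2 / R ^ 2 +
        2 * ((n : ℝ) - 1) * π / R * CtR := by ring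
end

section
/- For every integer n ≥ 2, every real number κ < 0, every constant ω_n > 0 and every R > 0, the test function f_R satisfies ∫_{R/2}^{R} f_R'(s)²·S^κ_n(s) ds ≤ Λ(R)·∫_{R/2}^{R} f_R(s)²·S^κ_n(s) ds, where Λ(R) = ((n−1)²/4)·Ct_κ(R/2)² + 8π²/R² + (4π(n−1)/R)·Ct_κ(R/2). -/
/-!
With `β = ((n - 1) / 2) Ct` half the logarithmic derivative of `Sn` and `c = 2π / R`, the
weighted energy density of `f = sin (c (s - R/2)) / √Sn` is `f'² Sn = (c cos - β sin)²`, while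
`f² Sn = sin²`. Since `Ct` is decreasing, `0 ≤ β ≤ B := β (R/2)` on `[R/2, R]`, so
`f'² Sn ≤ c² + 2cB + B² sin²`; integrating, with `∫ sin² = R/4` over half a period, gives the
bound with `Λ = B² + 2c² + 4cB`.
-/

open Real Set

theorem integral_sin_sq_mul_sub {a b c : ℝ} (hc : c * (b - a) = π) :
    ∫ x in a..b, sin (c * (x - a)) ^ 2 = (b - a) / 2 := by
  have hc0 : c ≠ 0 := by rintro rfl; simp [pi_ne_zero.symm] at hc
  simp_rw [mul_sub]
  rw [intervalIntegral.integral_comp_mul_sub (fun x => sin x ^ 2) hc0, integral_sin_sq,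
    sub_self, ← mul_sub, hc]
  simp only [sin_zero, sin_pi, zero_mul, sub_zero, zero_add, smul_eq_mul]
  rw [← hc]
  field_simp

theorem sq_mul_cos_sub_mul_sin_le {c β B x : ℝ} (hc : 0 ≤ c) (hβ : 0 ≤ β) (hβB : β ≤ B) :
    (c * cos x - β * sin x) ^ 2 ≤ c ^ 2 + 2 * c * B + B ^ 2 * sin x ^ 2 := by
  have h1 := sin_sq_add_cos_sq x
  have h2 : -(sin x * cos x) ≤ 1 := by nlinarith [sq_nonneg (sin x + cos x)]
  nlinarith [mul_le_mul_of_nonneg_left h2 (mul_nonneg hc hβ), mul_le_mul_of_nonneg_left hβB hc,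
    mul_le_mul_of_nonneg_right (pow_le_pow_left₀ hβ hβB 2) (sq_nonneg (sin x)),
    mul_nonneg (sq_nonneg c) (sq_nonneg (sin x))]

theorem sq_deriv_div_sqrt_mul {g ρ : ℝ → ℝ} {g' β x : ℝ} (hg : HasDerivAt g g' x)
    (hρ : HasDerivAt ρ (2 * β * ρ x) x) (hx : 0 < ρ x) :
    deriv (fun y => g y / √(ρ y)) x ^ 2 * ρ x = (g' - β * g x) ^ 2 := by
  have hsq : 0 < √(ρ x) := sqrt_pos.2 hx
  rw [(hg.fun_div (hρ.sqrt hx.ne') hsq.ne').deriv]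
  have hρ_eq := sq_sqrt hx.le
  generalize √(ρ x) = q at hρ_eq hsq ⊢
  rw [← hρ_eq]
  field_simp

theorem integral_sq_deriv_mul_le {ρ β f : ℝ → ℝ} {a b c B : ℝ} (hab : a < b)
    (hc : c * (b - a) = π) (hρ_pos : ∀ s ∈ Icc a b, 0 < ρ s)
    (hρ_deriv : ∀ s ∈ Icc a b, HasDerivAt ρ (2 * β s * ρ s) s)
    (hβ : ∀ s ∈ Icc a b, 0 ≤ β s ∧ β s ≤ B)
    (hf : ∀ s, f s = sin (c * (s - a)) / √(ρ s)) :
    ∫ s in a..b, deriv f s ^ 2 * ρ s ≤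
      (B ^ 2 + 2 * c ^ 2 + 4 * c * B) * ∫ s in a..b, f s ^ 2 * ρ s := by
  have hc_pos : 0 < c := pos_of_mul_pos_left (hc ▸ pi_pos) (sub_pos.2 hab).le
  obtain rfl : f = _ := funext hf
  have hweight : ∀ s ∈ Icc a b, (sin (c * (s - a)) / √(ρ s)) ^ 2 * ρ s = sin (c * (s - a)) ^ 2 :=
    fun s hs => by rw [div_pow, sq_sqrt (hρ_pos s hs).le, div_mul_cancel₀ _ (hρ_pos s hs).ne']
  have hpoint : ∀ s ∈ Icc a b, deriv (fun s => sin (c * (s - a)) / √(ρ s)) s ^ 2 * ρ s ≤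
      c ^ 2 + 2 * c * B + B ^ 2 * sin (c * (s - a)) ^ 2 := fun s hs => by
    have hsin : HasDerivAt (fun s => sin (c * (s - a))) (c * cos (c * (s - a))) s := by
      simpa [mul_comm] using (((hasDerivAt_id s).sub_const a).const_mul c).sin
    rw [sq_deriv_div_sqrt_mul hsin (hρ_deriv s hs) (hρ_pos s hs)]
    exact sq_mul_cos_sub_mul_sin_le hc_pos.le (hβ s hs).1 (hβ s hs).2
  have hcont : Continuous fun s => c ^ 2 + 2 * c * B + B ^ 2 * sin (c * (s - a)) ^ 2 := by
    fun_prop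
  calc ∫ s in a..b, deriv (fun s => sin (c * (s - a)) / √(ρ s)) s ^ 2 * ρ s
      ≤ ∫ s in a..b, (c ^ 2 + 2 * c * B + B ^ 2 * sin (c * (s - a)) ^ 2) := by
        rw [intervalIntegral.integral_of_le hab.le, intervalIntegral.integral_of_le hab.le]
        refine MeasureTheory.integral_mono_of_nonneg ?_ (hcont.intervalIntegrable a b).1 ?_
        · exact MeasureTheory.ae_restrict_of_forall_mem measurableSet_Ioc fun s hs =>
            mul_nonneg (sq_nonneg _) (hρ_pos s (Ioc_subset_Icc_self hs)).le
        · exact MeasureTheory.ae_restrict_of_forall_mem measurableSet_Ioc fun s hs =>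
            hpoint s (Ioc_subset_Icc_self hs)
    _ = (c ^ 2 + 2 * c * B) * (b - a) + B ^ 2 * ((b - a) / 2) := by
        rw [intervalIntegral.integral_add intervalIntegrable_const
          ((Continuous.intervalIntegrable (by fun_prop)) a b), intervalIntegral.integral_const,
          intervalIntegral.integral_const_mul, integral_sin_sq_mul_sub hc, smul_eq_mul, mul_comm]
    _ = (B ^ 2 + 2 * c ^ 2 + 4 * c * B) * ∫ s in a..b, sin (c * (s - a)) ^ 2 := by
        rw [integral_sin_sq_mul_sub hc]; ring
    _ = _ := by
        rw [intervalIntegral.integral_congr (fun s hs => hweight s (uIcc_of_le hab.le ▸ hs))]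

theorem cosh_div_sinh_antitoneOn : AntitoneOn (fun x => cosh x / sinh x) (Ioi 0) := by
  intro x hx y hy hxy
  have h := sinh_nonneg_iff.2 (sub_nonneg.2 hxy)
  rw [sinh_sub] at h
  rw [div_le_div_iff₀ (sinh_pos_iff.2 hy) (sinh_pos_iff.2 hx)]
  linarith

theorem mul_cosh_div_sinh_mul_le {a s t : ℝ} (ha : 0 < a) (hs : 0 < s) (hst : s ≤ t) :
    0 ≤ a * (cosh (a * t) / sinh (a * t)) ∧
      a * (cosh (a * t) / sinh (a * t)) ≤ a * (cosh (a * s) / sinh (a * s)) := by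
  have has : 0 < a * s := mul_pos ha hs
  have hast : a * s ≤ a * t := by gcongr
  have := sinh_pos_iff.2 (has.trans_le hast)
  exact ⟨by positivity,
    mul_le_mul_of_nonneg_left (cosh_div_sinh_antitoneOn has (has.trans_le hast) hast) ha.le⟩

theorem hasDerivAt_mul_sinh_div_pow {a t : ℝ} (ω : ℝ) (k : ℕ) (ha : a ≠ 0)
    (ht : sinh (a * t) ≠ 0) :
    HasDerivAt (fun t => ω * (sinh (a * t) / a) ^ k)
      (k * (a * (cosh (a * t) / sinh (a * t))) * (ω * (sinh (a * t) / a) ^ k)) t := by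
  have hS : HasDerivAt (fun t => sinh (a * t) / a) (cosh (a * t)) t := by
    simpa [mul_div_assoc, ha] using (((hasDerivAt_id t).const_mul a).sinh).div_const a
  refine ((hS.fun_pow k).const_mul ω).congr_deriv ?_
  rcases k with _ | k
  · simp
  · rw [pow_succ]; push_cast; field_simp

open Real in
/-- For n ≥ 2, κ < 0, ω_n > 0 and R > 0, the test function
f_R(s) = sin(2π(s − R/2)/R)/(S^κ_n(s))^{1/2} satisfies
∫_{R/2}^{R} f_R'(s)²·S^κ_n(s) ds ≤ Λ(R)·∫_{R/2}^{R} f_R(s)²·S^κ_n(s) ds,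
where Λ(R) = ((n−1)²/4)·Ct_κ(R/2)² + 8π²/R² + (4π(n−1)/R)·Ct_κ(R/2). -/
theorem stmt_9 (n : ℕ) (hn : 2 ≤ n) (κ : ℝ) (hκ : κ < 0) (ω : ℝ) (hω : 0 < ω)
    (R : ℝ) (hR : 0 < R)
    (S : ℝ → ℝ)
    (hS : ∀ t : ℝ, S t = Real.sinh (Real.sqrt (-κ) * t) / Real.sqrt (-κ))
    (Ct : ℝ → ℝ)
    (hCt : ∀ t : ℝ, Ct t =
        Real.sqrt (-κ) *
          (Real.cosh (Real.sqrt (-κ) * t) / Real.sinh (Real.sqrt (-κ) * t)))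
    (Sn : ℝ → ℝ) (hSn : ∀ r : ℝ, Sn r = ω * (S r) ^ (n - 1))
    (f : ℝ → ℝ)
    (hf : ∀ s : ℝ, f s = Real.sin (2 * π * (s - R / 2) / R) / Real.sqrt (Sn s)) :
    (∫ s in (R / 2)..R, (deriv f s) ^ 2 * Sn s) ≤
      ((((n : ℝ) - 1) ^ 2 / 4) * (Ct (R / 2)) ^ 2 + 8 * π ^ 2 / R ^ 2 +
          (4 * π * ((n : ℝ) - 1) / R) * Ct (R / 2)) *
        ∫ s in (R / 2)..R, (f s) ^ 2 * Sn s := by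
  set a := √(-κ)
  have ha : 0 < a := sqrt_pos.2 (neg_pos.2 hκ)
  have hsinh : ∀ s ∈ Icc (R / 2) R, 0 < sinh (a * s) := fun s hs =>
    sinh_pos_iff.2 (mul_pos ha (by linarith [hs.1]))
  have hSn_eq : Sn = fun t => ω * (sinh (a * t) / a) ^ (n - 1) :=
    funext fun t => by rw [hSn, hS]
  have hSn_pos : ∀ s ∈ Icc (R / 2) R, 0 < Sn s := fun s hs => by
    rw [hSn_eq]; have := hsinh s hs; positivity
  have hSn_deriv : ∀ s ∈ Icc (R / 2) R,
      HasDerivAt Sn (2 * (((n : ℝ) - 1) / 2 * Ct s) * Sn s) s := fun s hs => by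
    rw [hSn_eq]
    refine (hasDerivAt_mul_sinh_div_pow ω (n - 1) ha.ne' (hsinh s hs).ne').congr_deriv ?_
    rw [Nat.cast_sub (by omega), Nat.cast_one, hCt]
    ring
  have hβ : ∀ s ∈ Icc (R / 2) R, 0 ≤ ((n : ℝ) - 1) / 2 * Ct s ∧
      ((n : ℝ) - 1) / 2 * Ct s ≤ ((n : ℝ) - 1) / 2 * Ct (R / 2) := fun s hs => by
    have hn' : (0 : ℝ) ≤ ((n : ℝ) - 1) / 2 := by
      have : (2 : ℝ) ≤ n := by exact_mod_cast hn
      linarith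
    obtain ⟨hCt_nonneg, hCt_le⟩ := mul_cosh_div_sinh_mul_le ha (by linarith) hs.1
    simp only [hCt]
    exact ⟨mul_nonneg hn' hCt_nonneg, mul_le_mul_of_nonneg_left hCt_le hn'⟩
  convert integral_sq_deriv_mul_le (a := R / 2) (c := 2 * π / R) (f := f) (by linarith)
    (by field_simp; ring) hSn_pos hSn_deriv hβ (fun s => by rw [hf, mul_div_right_comm]) using 2
  field_simp
  ring
end

section
/- Let n ≥ 2 be an integer, κ < 0 a real number, ω_n > 0 a constant, and let V : (0, ∞) → (0, ∞) be a differentiable function such that Q(s) := V(s)/B^κ_n(s) is non-decreasing on (0, ∞) and sup_{R > 0} Q(R) < ∞. Then limsup_{R → ∞} [ ∫_{R/2}^{R} f_R'(s)²·V'(s) ds / ∫_{R/2}^{R} f_R(s)²·V'(s) ds ] ≤ −(n−1)²·κ/4. -/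
/-!
Write `B(s) = ∫₀ˢ S(t) dt` with `S = S^κ_n`, so that `V = Q B` and `V' = Q' B + Q S ≥ Q S`,
where `Q' ≥ 0` because `Q` is nondecreasing. Put `a = √(-κ)` and `θ(s) = 2π(s - R/2)/R ∈ [0, π]`.
The test function `f_R = sin θ / √S` has `f_R' = (θ' cos θ - β sin θ) / √S`, where
`β = S' / (2S) = (n-1) a/2 · coth(a s)` decreases to `(n-1) a/2`; hence on `[R/2, R]`
`f_R'² ≤ (θ'² + 2θ' β(R/2)) / S + β(R/2)² f_R²`. The error term is controlled by
`∫ V'/S = ∫ (Q' B/S + Q) ≤ ∫ (R Q' + Q) ≤ (3/2) R sup Q`, since `B(s) ≤ s S(s)`, and the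
denominator is at least `Q(1) R/4`. As `θ' = 2π/R → 0`, the Rayleigh quotient is at most
`β(R/2)² + O(1/R) → (n-1)² a²/4 = -(n-1)² κ/4`.
-/

open Real Filter Topology MeasureTheory Set

noncomputable section

def sinhPow (a ω : ℝ) (k : ℕ) (s : ℝ) : ℝ := ω * (sinh (a * s) / a) ^ k

def testFun (R : ℝ) (W : ℝ → ℝ) (s : ℝ) : ℝ := sin (2 * π * (s - R / 2) / R) / √(W s)

def rayleighQuotient (V f : ℝ → ℝ) (a b : ℝ) : ℝ :=
  (∫ s in a..b, deriv f s ^ 2 * deriv V s) / ∫ s in a..b, f s ^ 2 * deriv V s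

end

namespace Real

theorem cosh_div_sinh_eq_one_add {x : ℝ} (hx : x ≠ 0) :
    cosh x / sinh x = 1 + 2 / (exp (2 * x) - 1) := by
  have h : exp (2 * x) - 1 ≠ 0 := by
    rw [sub_ne_zero, Ne, exp_eq_one_iff]; simpa using hx
  have hs : sinh x ≠ 0 := by simpa using hx
  rw [div_eq_iff hs, one_add_div h, div_mul_eq_mul_div, eq_div_iff h, cosh_eq, sinh_eq,
    two_mul, exp_add, exp_neg]
  have := (exp_pos x).ne'
  field_simp
  ring

theorem antitoneOn_cosh_div_sinh : AntitoneOn (fun x => cosh x / sinh x) (Ioi 0) := by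
  intro x hx y hy hxy
  have : 0 < exp (2 * x) - 1 := sub_pos.2 (one_lt_exp_iff.2 (by simp at hx; linarith))
  simp only [cosh_div_sinh_eq_one_add (ne_of_gt hx), cosh_div_sinh_eq_one_add (ne_of_gt hy)]
  gcongr

theorem tendsto_cosh_div_sinh_atTop : Tendsto (fun x => cosh x / sinh x) atTop (𝓝 1) := by
  have h : Tendsto (fun x => exp (2 * x) - 1) atTop atTop :=
    tendsto_atTop_add_const_right _ _ (tendsto_exp_atTop.comp (tendsto_id.const_mul_atTop two_pos))
  have := tendsto_const_nhds (x := (1 : ℝ)).add (h.const_div_atTop 2)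
  rw [add_zero] at this
  refine this.congr' ?_
  filter_upwards [eventually_gt_atTop 0] with x hx
  exact (cosh_div_sinh_eq_one_add hx.ne').symm

end Real

section SinhPow

variable {a ω s : ℝ} {k : ℕ}

theorem continuous_sinhPow : Continuous (sinhPow a ω k) := by
  unfold sinhPow; fun_prop

theorem sinhPow_pos (ha : 0 < a) (hω : 0 < ω) (hs : 0 < s) : 0 < sinhPow a ω k s := by
  have := sinh_pos_iff.2 (mul_pos ha hs)
  unfold sinhPow; positivity

theorem hasDerivAt_sinhPow (ha : a ≠ 0) (hs : s ≠ 0) :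
    HasDerivAt (sinhPow a ω k)
      (2 * (k * a / 2 * (cosh (a * s) / sinh (a * s))) * sinhPow a ω k s) s := by
  have hsinh : sinh (a * s) ≠ 0 := by simpa using mul_ne_zero ha hs
  have h : HasDerivAt (fun t => sinh (a * t) / a) (cosh (a * s)) s := by
    have h := ((hasDerivAt_sinh _).comp s ((hasDerivAt_id s).const_mul a)).div_const a
    simp only [Function.comp_def, id, mul_one] at h
    exact h.congr_deriv (mul_div_cancel_right₀ _ ha)
  refine (h.pow k |>.const_mul ω).congr_deriv ?_
  unfold sinhPow
  rcases k with _ | k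
  · simp
  · simp only [Nat.add_sub_cancel, pow_succ]
    field_simp

end SinhPow

theorem HasDerivAt.div_sqrt {g W : ℝ → ℝ} {g' b s : ℝ} (hg : HasDerivAt g g' s)
    (hW : HasDerivAt W (2 * b * W s) s) (hWs : 0 < W s) :
    HasDerivAt (fun t => g t / √(W t)) ((g' - b * g s) / √(W s)) s := by
  have hr := sqrt_pos.2 hWs
  have hsqrt : HasDerivAt (fun t => √(W t)) (b * √(W s)) s := by
    convert hW.sqrt hWs.ne' using 1
    field_simp
    rw [sq_sqrt hWs.le]
  refine (hg.div hsqrt hr.ne').congr_deriv ?_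
  field_simp

theorem monotoneOn_Ioi_of_hasDerivAt_nonneg {f f' : ℝ → ℝ} {a : ℝ}
    (hf : ∀ x > a, HasDerivAt f (f' x) x) (hf' : ∀ x > a, 0 ≤ f' x) : MonotoneOn f (Ioi a) :=
  monotoneOn_of_hasDerivWithinAt_nonneg (convex_Ioi a)
    (fun x hx => (hf x hx).continuousAt.continuousWithinAt)
    (fun x hx => (hf x (by simpa using hx)).hasDerivWithinAt) fun x hx => hf' x (by simpa using hx)

theorem MonotoneOn.deriv_nonneg_of_mem_nhds {f : ℝ → ℝ} {U : Set ℝ} {x : ℝ}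
    (hf : MonotoneOn f U) (hU : U ∈ 𝓝 x) : 0 ≤ deriv f x := by
  rw [← derivWithin_of_mem_nhds hU]
  exact hf.derivWithin_nonneg

theorem MonotoneOn.integral_le_mul {f : ℝ → ℝ} {s : ℝ} (hf : MonotoneOn f (Ioi 0))
    (hfc : Continuous f) (hs : 0 < s) : ∫ t in (0 : ℝ)..s, f t ≤ s * f s := by
  have := intervalIntegral.integral_mono_on_of_le_Ioo hs.le (hfc.intervalIntegrable 0 s)
    (intervalIntegrable_const : IntervalIntegrable (fun _ => f s) volume 0 s)
    fun t ht => hf ht.1 (mem_Ioi.2 hs) ht.2.le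
  simpa using this

theorem intervalIntegral.integral_mono_on_of_nonneg {f g : ℝ → ℝ} {a b : ℝ} (hab : a ≤ b)
    (hg : IntervalIntegrable g volume a b) (hf : ∀ x ∈ Icc a b, 0 ≤ f x)
    (h : ∀ x ∈ Icc a b, f x ≤ g x) : ∫ x in a..b, f x ≤ ∫ x in a..b, g x := by
  rw [intervalIntegral.integral_of_le hab, intervalIntegral.integral_of_le hab]
  exact integral_mono_of_nonneg
    (ae_restrict_of_forall_mem measurableSet_Ioc fun x hx => hf x (Ioc_subset_Icc_self hx)) hg.1
    (ae_restrict_of_forall_mem measurableSet_Ioc fun x hx => h x (Ioc_subset_Icc_self hx))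

theorem sq_mul_cos_sub_mul_sin_le_s15 {α β M θ : ℝ} (hα : 0 ≤ α) (hβ : 0 ≤ β) (hβM : β ≤ M)
    (hθ : 0 ≤ sin θ) :
    (α * cos θ - β * sin θ) ^ 2 ≤ α ^ 2 + 2 * α * M + M ^ 2 * sin θ ^ 2 := by
  have hs := sin_le_one θ
  have hc := neg_one_le_cos θ
  have hsc := sin_sq_add_cos_sq θ
  have h1 : -(cos θ * sin θ * β) ≤ M := by nlinarith [mul_nonneg hθ hβ]
  have h2 : β ^ 2 * sin θ ^ 2 ≤ M ^ 2 * sin θ ^ 2 := by gcongr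
  nlinarith [mul_le_mul_of_nonneg_left h1 hα, sq_nonneg (sin θ)]

theorem integral_sin_sq_half_period {R : ℝ} (hR : R ≠ 0) :
    ∫ s in R / 2..R, sin (2 * π * (s - R / 2) / R) ^ 2 = R / 4 := by
  have hc : 2 * π / R ≠ 0 := by positivity
  have h := intervalIntegral.integral_comp_mul_sub (fun x => sin x ^ 2) hc π (a := R / 2) (b := R)
  have e1 : 2 * π / R * (R / 2) - π = 0 := by field_simp; ring
  have e2 : 2 * π / R * R - π = π := by field_simp; ring
  simp only [e1, e2, integral_sin_sq, sin_zero, sin_pi, smul_eq_mul] at h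
  calc _ = ∫ s in R / 2..R, sin (2 * π / R * s - π) ^ 2 := by
          congr 1; ext s; congr 2; field_simp
    _ = R / 4 := by rw [h]; field_simp; ring

theorem rayleighQuotient_nonneg {V f : ℝ → ℝ} {a b : ℝ} (hab : a ≤ b)
    (hV : ∀ s ∈ Icc a b, 0 ≤ deriv V s) : 0 ≤ rayleighQuotient V f a b :=
  div_nonneg (intervalIntegral.integral_nonneg hab fun s hs => mul_nonneg (sq_nonneg _) (hV s hs))
    (intervalIntegral.integral_nonneg hab fun s hs => mul_nonneg (sq_nonneg _) (hV s hs))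

section TestFunction

variable {R M c K : ℝ} {W β ν V : ℝ → ℝ}

theorem sin_two_pi_mul_sub_half_div_nonneg {s : ℝ} (hR : 0 < R) (hs : s ∈ Icc (R / 2) R) :
    0 ≤ sin (2 * π * (s - R / 2) / R) := by
  apply sin_nonneg_of_nonneg_of_le_pi
  · have := hs.1; have := pi_pos; positivity
  · rw [div_le_iff₀ hR]; nlinarith [hs.2, pi_pos]

theorem continuousOn_testFun (hWc : ContinuousOn W (Icc (R / 2) R))
    (hW : ∀ s ∈ Icc (R / 2) R, 0 < W s) : ContinuousOn (testFun R W) (Icc (R / 2) R) :=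
  (continuous_sin.comp (by fun_prop)).continuousOn.div hWc.sqrt
    fun s hs => (sqrt_pos.2 (hW s hs)).ne'

theorem hasDerivAt_testFun {s b : ℝ} (hWd : HasDerivAt W (2 * b * W s) s) (hWs : 0 < W s) :
    HasDerivAt (testFun R W) ((2 * π / R * cos (2 * π * (s - R / 2) / R)
      - b * sin (2 * π * (s - R / 2) / R)) / √(W s)) s := by
  have hθ : HasDerivAt (fun t => 2 * π * (t - R / 2) / R) (2 * π / R) s := by
    simpa using (((hasDerivAt_id s).sub_const (R / 2)).const_mul (2 * π)).div_const R
  have := ((hasDerivAt_sin _).comp s hθ).div_sqrt hWd hWs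
  rw [mul_comm (cos _)] at this
  exact this

theorem testFun_sq {s : ℝ} (hWs : 0 < W s) :
    testFun R W s ^ 2 = sin (2 * π * (s - R / 2) / R) ^ 2 / W s := by
  rw [testFun, div_pow, sq_sqrt hWs.le]

theorem integral_deriv_testFun_sq_mul_le (hR : 0 < R) (hWc : ContinuousOn W (Icc (R / 2) R))
    (hW : ∀ s ∈ Icc (R / 2) R, 0 < W s)
    (hWd : ∀ s ∈ Icc (R / 2) R, HasDerivAt W (2 * β s * W s) s)
    (hβ : ∀ s ∈ Icc (R / 2) R, 0 ≤ β s ∧ β s ≤ M) (hν : IntervalIntegrable ν volume (R / 2) R)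
    (hν0 : ∀ s ∈ Icc (R / 2) R, 0 ≤ ν s) :
    ∫ s in R / 2..R, deriv (testFun R W) s ^ 2 * ν s ≤
      ((2 * π / R) ^ 2 + 2 * (2 * π / R) * M) * (∫ s in R / 2..R, ν s / W s) +
        M ^ 2 * ∫ s in R / 2..R, testFun R W s ^ 2 * ν s := by
  have hle : R / 2 ≤ R := by linarith
  have hI : IntervalIntegrable (fun s => ν s / W s) volume (R / 2) R := by
    simp_rw [div_eq_mul_inv]
    exact hν.mul_continuousOn (by rw [uIcc_of_le hle]; exact hWc.inv₀ fun s hs => (hW s hs).ne')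
  have hD : IntervalIntegrable (fun s => testFun R W s ^ 2 * ν s) volume (R / 2) R :=
    hν.continuousOn_mul (by rw [uIcc_of_le hle]; exact (continuousOn_testFun hWc hW).pow 2)
  rw [← intervalIntegral.integral_const_mul, ← intervalIntegral.integral_const_mul,
    ← intervalIntegral.integral_add (hI.const_mul _) (hD.const_mul _)]
  refine intervalIntegral.integral_mono_on_of_nonneg hle ((hI.const_mul _).add (hD.const_mul _))
    (fun s hs => mul_nonneg (sq_nonneg _) (hν0 s hs)) fun s hs => ?_
  have hWs := hW s hs
  rw [(hasDerivAt_testFun (hWd s hs) hWs).deriv, div_pow, sq_sqrt hWs.le, testFun_sq hWs]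
  calc _ ≤ ((2 * π / R) ^ 2 + 2 * (2 * π / R) * M +
          M ^ 2 * sin (2 * π * (s - R / 2) / R) ^ 2) / W s * ν s := by
        gcongr
        · exact hν0 s hs
        · exact sq_mul_cos_sub_mul_sin_le_s15 (by positivity) (hβ s hs).1 (hβ s hs).2
            (sin_two_pi_mul_sub_half_div_nonneg hR hs)
    _ = _ := by ring

theorem mul_le_integral_testFun_sq_mul (hR : 0 < R) (hWc : ContinuousOn W (Icc (R / 2) R))
    (hW : ∀ s ∈ Icc (R / 2) R, 0 < W s) (hν : IntervalIntegrable ν volume (R / 2) R)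
    (hcν : ∀ s ∈ Icc (R / 2) R, c * W s ≤ ν s) :
    c * (R / 4) ≤ ∫ s in R / 2..R, testFun R W s ^ 2 * ν s := by
  have hle : R / 2 ≤ R := by linarith
  rw [← integral_sin_sq_half_period hR.ne', ← intervalIntegral.integral_const_mul]
  refine intervalIntegral.integral_mono_on hle (Continuous.intervalIntegrable (by fun_prop) _ _)
    (hν.continuousOn_mul (by rw [uIcc_of_le hle]; exact (continuousOn_testFun hWc hW).pow 2))
    fun s hs => ?_
  have hWs := hW s hs
  rw [testFun_sq hWs]
  calc c * sin (2 * π * (s - R / 2) / R) ^ 2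
      = sin (2 * π * (s - R / 2) / R) ^ 2 / W s * (c * W s) := by field_simp
    _ ≤ _ := by gcongr; exact hcν s hs

theorem rayleighQuotient_testFun_le (hR : 0 < R) (hWc : ContinuousOn W (Icc (R / 2) R))
    (hW : ∀ s ∈ Icc (R / 2) R, 0 < W s)
    (hWd : ∀ s ∈ Icc (R / 2) R, HasDerivAt W (2 * β s * W s) s)
    (hβ : ∀ s ∈ Icc (R / 2) R, 0 ≤ β s ∧ β s ≤ M)
    (hV : IntervalIntegrable (deriv V) volume (R / 2) R) (hc : 0 < c)
    (hcV : ∀ s ∈ Icc (R / 2) R, c * W s ≤ deriv V s)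
    (hK : ∫ s in R / 2..R, deriv V s / W s ≤ K * R) :
    rayleighQuotient V (testFun R W) (R / 2) R ≤
      M ^ 2 + ((2 * π / R) ^ 2 + 2 * (2 * π / R) * M) * (4 * K / c) := by
  have hR2 : R ∈ Icc (R / 2) R := ⟨by linarith, le_rfl⟩
  have hV0 : ∀ s ∈ Icc (R / 2) R, 0 ≤ deriv V s := fun s hs =>
    (mul_pos hc (hW s hs)).le.trans (hcV s hs)
  have hD := mul_le_integral_testFun_sq_mul hR hWc hW hV hcV
  have hDpos : 0 < ∫ s in R / 2..R, testFun R W s ^ 2 * deriv V s :=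
    lt_of_lt_of_le (by positivity) hD
  have hK0 : 0 ≤ K := by
    have := (intervalIntegral.integral_nonneg (by linarith) fun s hs =>
      div_nonneg (hV0 s hs) (hW s hs).le).trans hK
    exact nonneg_of_mul_nonneg_left this hR
  have hA : 0 ≤ (2 * π / R) ^ 2 + 2 * (2 * π / R) * M := by
    have := (hβ R hR2).1.trans (hβ R hR2).2; positivity
  have hKD : K * R ≤ 4 * K / c * ∫ s in R / 2..R, testFun R W s ^ 2 * deriv V s :=
    calc K * R = 4 * K / c * (c * (R / 4)) := by field_simp
      _ ≤ _ := by gcongr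
  rw [rayleighQuotient, div_le_iff₀ hDpos]
  refine (integral_deriv_testFun_sq_mul_le hR hWc hW hWd hβ hV hV0).trans ?_
  nlinarith [mul_le_mul_of_nonneg_left (hK.trans hKD) hA]

end TestFunction

theorem limsup_le_of_eventually_le_of_tendsto {α : Type*} {l : Filter α} [l.NeBot]
    {u g : α → ℝ} {c L : ℝ} (hc : ∀ᶠ x in l, c ≤ u x) (hle : ∀ᶠ x in l, u x ≤ g x)
    (hg : Tendsto g l (𝓝 L)) : limsup u l ≤ L :=
  (limsup_le_limsup hle (isBoundedUnder_of_eventually_ge hc).isCoboundedUnder_le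
    hg.isBoundedUnder_le).trans_eq hg.limsup_eq

theorem tendsto_sq_half_add_two_pi_div_mul {β : ℝ → ℝ} {μ : ℝ} (K : ℝ)
    (hβ : Tendsto β atTop (𝓝 μ)) :
    Tendsto (fun R => β (R / 2) ^ 2 + ((2 * π / R) ^ 2 + 2 * (2 * π / R) * β (R / 2)) * K)
      atTop (𝓝 (μ ^ 2)) := by
  have hβ' := hβ.comp (tendsto_id.atTop_div_const two_pos)
  have hα : Tendsto (fun R : ℝ => 2 * π / R) atTop (𝓝 0) :=
    tendsto_const_nhds.div_atTop tendsto_id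
  simpa using (hβ'.pow 2).add (((hα.pow 2).add ((hα.const_mul 2).mul hβ')).mul_const K)

theorem deriv_eq_deriv_div_mul_add {V B : ℝ → ℝ} {b s : ℝ} (hV : DifferentiableAt ℝ V s)
    (hB : HasDerivAt B b s) (hBs : B s ≠ 0) :
    deriv V s = deriv (fun t => V t / B t) s * B s + V s / B s * b := by
  rw [show deriv (fun t => V t / B t) s = _ from (hV.hasDerivAt.div hB hBs).deriv]
  field_simp
  ring

section MonotoneQuotient

variable {V B W : ℝ → ℝ}

theorem div_mul_le_deriv_of_monotoneOn_div (hV : ∀ s > 0, DifferentiableAt ℝ V s)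
    (hB : ∀ s > 0, HasDerivAt B (W s) s) (hBpos : ∀ s > 0, 0 < B s)
    (hQ : MonotoneOn (fun s => V s / B s) (Ioi 0)) {s : ℝ} (hs : 0 < s) :
    V s / B s * W s ≤ deriv V s := by
  rw [deriv_eq_deriv_div_mul_add (hV s hs) (hB s hs) (hBpos s hs).ne', le_add_iff_nonneg_left]
  exact mul_nonneg (hQ.deriv_nonneg_of_mem_nhds (Ioi_mem_nhds hs)) (hBpos s hs).le

theorem deriv_nonneg_of_monotoneOn_div (hV : ∀ s > 0, DifferentiableAt ℝ V s)
    (hVpos : ∀ s > 0, 0 < V s) (hB : ∀ s > 0, HasDerivAt B (W s) s)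
    (hBpos : ∀ s > 0, 0 < B s) (hW : ∀ s > 0, 0 < W s)
    (hQ : MonotoneOn (fun s => V s / B s) (Ioi 0)) {s : ℝ} (hs : 0 < s) : 0 ≤ deriv V s :=
  (mul_nonneg (div_pos (hVpos s hs) (hBpos s hs)).le (hW s hs).le).trans
    (div_mul_le_deriv_of_monotoneOn_div hV hB hBpos hQ hs)

theorem integral_deriv_div_le_of_monotoneOn_div (hV : ∀ s > 0, DifferentiableAt ℝ V s)
    (hVpos : ∀ s > 0, 0 < V s) (hB : ∀ s > 0, HasDerivAt B (W s) s)
    (hBpos : ∀ s > 0, 0 < B s) (hBle : ∀ s > 0, B s ≤ s * W s) (hW : ∀ s > 0, 0 < W s)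
    (hQ : MonotoneOn (fun s => V s / B s) (Ioi 0)) {C R : ℝ}
    (hC : ∀ s > 0, V s / B s ≤ C) (hR : 0 < R) :
    ∫ s in R / 2..R, deriv V s / W s ≤ 3 / 2 * C * R := by
  set Q := fun s => V s / B s
  have hle : R / 2 ≤ R := by linarith
  have hpos : ∀ s ∈ Icc (R / 2) R, 0 < s := fun s hs => by linarith [hs.1]
  have hQI : MonotoneOn Q (uIcc (R / 2) R) :=
    hQ.mono fun s hs => hpos s (by rwa [uIcc_of_le hle] at hs)
  have hq : ∫ s in R / 2..R, deriv Q s ≤ Q R - Q (R / 2) := by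
    have := hQI.intervalIntegral_deriv_mem_uIcc
    rw [uIcc_of_le (sub_nonneg.2 (hQI (by simp) (by simp) hle))] at this
    exact this.2
  have hpt : ∀ s ∈ Icc (R / 2) R, deriv V s / W s ≤ R * deriv Q s + C := fun s hs => by
    have hs0 := hpos s hs
    have hBW : B s / W s ≤ R := by
      rw [div_le_iff₀ (hW s hs0)]
      exact (hBle s hs0).trans (mul_le_mul_of_nonneg_right hs.2 (hW s hs0).le)
    rw [deriv_eq_deriv_div_mul_add (hV s hs0) (hB s hs0) (hBpos s hs0).ne', add_div,
      mul_div_assoc, mul_div_assoc, div_self (hW s hs0).ne', mul_one, mul_comm R]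
    gcongr
    · exact hQ.deriv_nonneg_of_mem_nhds (Ioi_mem_nhds hs0)
    · exact hC s hs0
  calc ∫ s in R / 2..R, deriv V s / W s
      ≤ ∫ s in R / 2..R, (R * deriv Q s + C) :=
        intervalIntegral.integral_mono_on_of_nonneg hle
          ((hQI.intervalIntegrable_deriv.const_mul R).add intervalIntegrable_const)
          (fun s hs => div_nonneg (deriv_nonneg_of_monotoneOn_div hV hVpos hB hBpos hW hQ
            (hpos s hs)) (hW s (hpos s hs)).le) hpt
    _ = R * (∫ s in R / 2..R, deriv Q s) + C * (R / 2) := by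
        rw [intervalIntegral.integral_add (hQI.intervalIntegrable_deriv.const_mul R)
          intervalIntegrable_const, intervalIntegral.integral_const_mul,
          intervalIntegral.integral_const, smul_eq_mul]
        ring
    _ ≤ R * C + C * (R / 2) := by
        gcongr
        have := hC R hR
        have := div_pos (hVpos (R / 2) (by linarith)) (hBpos (R / 2) (by linarith))
        linarith
    _ = 3 / 2 * C * R := by ring

end MonotoneQuotient

theorem limsup_rayleighQuotient_testFun_le {W β V : ℝ → ℝ} {μ : ℝ} (hWc : Continuous W)
    (hW : ∀ s > 0, 0 < W s) (hWd : ∀ s > 0, HasDerivAt W (2 * β s * W s) s)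
    (hβ : ∀ s > 0, 0 ≤ β s) (hβanti : AntitoneOn β (Ioi 0)) (hβlim : Tendsto β atTop (𝓝 μ))
    (hVpos : ∀ s > 0, 0 < V s) (hVdiff : ∀ s > 0, DifferentiableAt ℝ V s)
    (hQmono : MonotoneOn (fun s => V s / ∫ t in (0 : ℝ)..s, W t) (Ioi 0))
    (hQbdd : ∃ C, ∀ R > 0, V R / (∫ t in (0 : ℝ)..R, W t) ≤ C) :
    limsup (fun R => rayleighQuotient V (testFun R W) (R / 2) R) atTop ≤ μ ^ 2 := by
  obtain ⟨C, hC⟩ := hQbdd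
  set B := fun s => ∫ t in (0 : ℝ)..s, W t
  have hB : ∀ s > 0, HasDerivAt B (W s) s := fun s _ =>
    (hWc.integral_hasStrictDerivAt 0 s).hasDerivAt
  have hBpos : ∀ s > 0, 0 < B s := fun s hs =>
    intervalIntegral.intervalIntegral_pos_of_pos_on (hWc.intervalIntegrable 0 s)
      (fun t ht => hW t ht.1) hs
  have hWmono : MonotoneOn W (Ioi 0) := monotoneOn_Ioi_of_hasDerivAt_nonneg hWd fun s hs => by
    have := hβ s hs; have := hW s hs; positivity
  have hBle : ∀ s > 0, B s ≤ s * W s := fun s hs => hWmono.integral_le_mul hWc hs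
  have hV'0 : ∀ s > 0, 0 ≤ deriv V s := fun s hs =>
    deriv_nonneg_of_monotoneOn_div hVdiff hVpos hB hBpos hW hQmono hs
  have hVmono : MonotoneOn V (Ioi 0) :=
    monotoneOn_Ioi_of_hasDerivAt_nonneg (fun s hs => (hVdiff s hs).hasDerivAt) hV'0
  have hQ1 : 0 < V 1 / B 1 := div_pos (hVpos 1 one_pos) (hBpos 1 one_pos)
  have hbound : ∀ᶠ R in atTop, rayleighQuotient V (testFun R W) (R / 2) R ≤
      β (R / 2) ^ 2 + ((2 * π / R) ^ 2 + 2 * (2 * π / R) * β (R / 2)) *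
        (4 * (3 / 2 * C) / (V 1 / B 1)) := by
    filter_upwards [eventually_ge_atTop 2] with R hR
    have hpos : ∀ s ∈ Icc (R / 2) R, 0 < s := fun s hs => by linarith [hs.1]
    have hV'int : IntervalIntegrable (deriv V) volume (R / 2) R :=
      (hVmono.mono fun s hs => hpos s (by rwa [uIcc_of_le (by linarith)] at hs)
        ).intervalIntegrable_deriv
    refine rayleighQuotient_testFun_le (by linarith) hWc.continuousOn
      (fun s hs => hW s (hpos s hs)) (fun s hs => hWd s (hpos s hs))
      (fun s hs => ⟨hβ s (hpos s hs), hβanti (hpos _ ⟨le_rfl, by linarith⟩) (hpos s hs) hs.1⟩)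
      hV'int hQ1 (fun s hs => ?_)
      (integral_deriv_div_le_of_monotoneOn_div hVdiff hVpos hB hBpos hBle hW hQmono hC
        (by linarith))
    refine (mul_le_mul_of_nonneg_right ?_ (hW s (hpos s hs)).le).trans
      (div_mul_le_deriv_of_monotoneOn_div hVdiff hB hBpos hQmono (hpos s hs))
    exact hQmono (mem_Ioi.2 one_pos) (hpos s hs) (by linarith [hs.1])
  have hnonneg : ∀ᶠ R in atTop, 0 ≤ rayleighQuotient V (testFun R W) (R / 2) R := by
    filter_upwards [eventually_gt_atTop 0] with R hR
    exact rayleighQuotient_nonneg (by linarith) fun s hs => hV'0 s (by linarith [hs.1])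
  exact limsup_le_of_eventually_le_of_tendsto hnonneg hbound
    (tendsto_sq_half_add_two_pi_div_mul (4 * (3 / 2 * C) / (V 1 / B 1)) hβlim)

theorem limsup_rayleighQuotient_testFun_sinhPow_le {a ω : ℝ} {k : ℕ} {V : ℝ → ℝ}
    (ha : 0 < a) (hω : 0 < ω) (hVpos : ∀ s > 0, 0 < V s)
    (hVdiff : ∀ s > 0, DifferentiableAt ℝ V s)
    (hQmono : MonotoneOn (fun s => V s / ∫ t in (0 : ℝ)..s, sinhPow a ω k t) (Ioi 0))
    (hQbdd : ∃ C, ∀ R > 0, V R / (∫ t in (0 : ℝ)..R, sinhPow a ω k t) ≤ C) :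
    limsup (fun R => rayleighQuotient V (testFun R (sinhPow a ω k)) (R / 2) R) atTop ≤
      (k * a / 2) ^ 2 := by
  have hβlim : Tendsto (fun s => k * a / 2 * (cosh (a * s) / sinh (a * s))) atTop
      (𝓝 (k * a / 2)) := by
    simpa using (tendsto_cosh_div_sinh_atTop.comp (tendsto_id.const_mul_atTop ha)).const_mul
      (k * a / 2 : ℝ)
  refine limsup_rayleighQuotient_testFun_le continuous_sinhPow
    (fun s hs => sinhPow_pos ha hω hs) (fun s hs => hasDerivAt_sinhPow ha.ne' hs.ne')
    (fun s hs => ?_) (fun s hs t ht hst => ?_) hβlim hVpos hVdiff hQmono hQbdd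
  · have := sinh_pos_iff.2 (mul_pos ha hs); have := cosh_pos (a * s); positivity
  · exact mul_le_mul_of_nonneg_left (antitoneOn_cosh_div_sinh (mul_pos ha hs) (mul_pos ha ht)
      (by gcongr)) (by positivity)

open Real in
theorem stmt_15_general (n : ℕ) (κ : ℝ) (hκ : κ < 0) (ω : ℝ) (hω : 0 < ω)
    (S : ℝ → ℝ)
    (hS : ∀ t : ℝ, S t = Real.sinh (Real.sqrt (-κ) * t) / Real.sqrt (-κ))
    (Sn : ℝ → ℝ) (hSn : ∀ R : ℝ, Sn R = ω * (S R) ^ (n - 1))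
    (Bn : ℝ → ℝ) (hBn : ∀ R : ℝ, Bn R = ∫ s in (0:ℝ)..R, Sn s)
    (V : ℝ → ℝ) (hVpos : ∀ s > (0:ℝ), 0 < V s)
    (hVdiff : ∀ s > (0:ℝ), DifferentiableAt ℝ V s)
    (Q : ℝ → ℝ) (hQ : ∀ s : ℝ, Q s = V s / Bn s)
    (hQmono : MonotoneOn Q (Set.Ioi (0:ℝ)))
    (hQbdd : ∃ C : ℝ, ∀ R > (0:ℝ), Q R ≤ C)
    (f : ℝ → ℝ → ℝ)
    (hf : ∀ R s : ℝ, f R s =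
        Real.sin (2 * π * (s - R / 2) / R) / Real.sqrt (Sn s)) :
    Filter.limsup
        (fun R =>
          (∫ s in (R / 2)..R, (deriv (f R) s) ^ 2 * deriv V s) /
            (∫ s in (R / 2)..R, (f R s) ^ 2 * deriv V s))
        Filter.atTop ≤ -((n : ℝ) - 1) ^ 2 * κ / 4 := by
  have hSn' : Sn = sinhPow √(-κ) ω (n - 1) := funext fun s => by rw [hSn, hS, sinhPow]
  have hQ' : Q = fun s => V s / ∫ t in (0 : ℝ)..s, Sn t := funext fun s => by rw [hQ, hBn]
  have hf' : f = fun R => testFun R Sn := funext fun R => funext (hf R)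
  subst hSn' hQ' hf'
  have hk : (((n - 1 : ℕ) : ℝ)) ^ 2 ≤ ((n : ℝ) - 1) ^ 2 := by rcases n with _ | n <;> simp
  calc _ ≤ ((n - 1 : ℕ) * √(-κ) / 2) ^ 2 := limsup_rayleighQuotient_testFun_sinhPow_le
          (sqrt_pos.2 (neg_pos.2 hκ)) hω hVpos hVdiff hQmono hQbdd
    _ ≤ _ := by
        rw [div_pow, mul_pow, sq_sqrt (neg_nonneg.2 hκ.le)]
        nlinarith

open Real in
/-- For n ≥ 2, κ < 0, ω_n > 0, V : (0,∞) → (0,∞) differentiable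
with Q(s) := V(s)/B^κ_n(s) non-decreasing on (0, ∞) and sup_{R>0} Q(R) < ∞,
and f_R(s) = sin(2π(s − R/2)/R)/(S^κ_n(s))^{1/2}:
limsup_{R → ∞} [∫_{R/2}^{R} f_R'(s)²·V'(s) ds / ∫_{R/2}^{R} f_R(s)²·V'(s) ds]
  ≤ −(n−1)²·κ/4. -/
theorem stmt_15 (n : ℕ) (hn : 2 ≤ n) (κ : ℝ) (hκ : κ < 0) (ω : ℝ) (hω : 0 < ω)
    (S : ℝ → ℝ)
    (hS : ∀ t : ℝ, S t = Real.sinh (Real.sqrt (-κ) * t) / Real.sqrt (-κ))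
    (Sn : ℝ → ℝ) (hSn : ∀ R : ℝ, Sn R = ω * (S R) ^ (n - 1))
    (Bn : ℝ → ℝ) (hBn : ∀ R : ℝ, Bn R = ∫ s in (0:ℝ)..R, Sn s)
    (V : ℝ → ℝ) (hVpos : ∀ s > (0:ℝ), 0 < V s)
    (hVdiff : ∀ s > (0:ℝ), DifferentiableAt ℝ V s)
    (Q : ℝ → ℝ) (hQ : ∀ s : ℝ, Q s = V s / Bn s)
    (hQmono : MonotoneOn Q (Set.Ioi (0:ℝ)))
    (hQbdd : ∃ C : ℝ, ∀ R > (0:ℝ), Q R ≤ C)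
    (f : ℝ → ℝ → ℝ)
    (hf : ∀ R s : ℝ, f R s =
        Real.sin (2 * π * (s - R / 2) / R) / Real.sqrt (Sn s)) :
    Filter.limsup
        (fun R =>
          (∫ s in (R / 2)..R, (deriv (f R) s) ^ 2 * deriv V s) /
            (∫ s in (R / 2)..R, (f R s) ^ 2 * deriv V s))
        Filter.atTop ≤ -((n : ℝ) - 1) ^ 2 * κ / 4 :=
  stmt_15_general n κ hκ ω hω S hS Sn hSn Bn hBn V hVpos hVdiff Q hQ hQmono hQbdd f hf
end
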